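/- arXiv:2406.17273 — 3 statements merged into one kernel-verified Lean document; each statement's English description precedes it below -/
import Mathlib

section
/- Let E : ℝⁿ → ℝⁿ, M a nonempty open E-invex subset of ℝⁿ, and f : M → ℝ an E-differentiable exponentially E-invex function on M with respect to η. Then for all x, x₀ ∈ M, (∇f(E(x))·e^{f(E(x))} − ∇f(E(x₀))·e^{f(E(x₀))}) · η(E(x), E(x₀)) ≥ 0. -/
open Real

theorem exp_E_invex_monotonicity_general {n : ℕ}
    (E : (Fin n → ℝ) → (Fin n → ℝ)) (M : Set (Fin n → ℝ))
    (η : (Fin n → ℝ) → (Fin n → ℝ) → (Fin n → ℝ)) (f : (Fin n → ℝ) → ℝ)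
    (hskew : ∀ x ∈ M, ∀ x₀ ∈ M, η (E x₀) (E x) = - η (E x) (E x₀))
    (hEinvex : ∀ x ∈ M, ∀ x₀ ∈ M,
      exp (f (E x)) - exp (f (E x₀)) ≥
        exp (f (E x₀)) * fderiv ℝ (f ∘ E) x₀ (η (E x) (E x₀))) :
    ∀ x ∈ M, ∀ x₀ ∈ M,
      exp (f (E x)) * fderiv ℝ (f ∘ E) x (η (E x) (E x₀)) -
        exp (f (E x₀)) * fderiv ℝ (f ∘ E) x₀ (η (E x) (E x₀)) ≥ 0 := by
  intro x hx x₀ hx₀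
  have forward := hEinvex x hx x₀ hx₀
  have backward := hEinvex x₀ hx₀ x hx
  rw [hskew x hx x₀ hx₀, map_neg] at backward
  linarith

theorem exp_E_invex_monotonicity {n : ℕ}
    (E : (Fin n → ℝ) → (Fin n → ℝ)) (M : Set (Fin n → ℝ))
    (η : (Fin n → ℝ) → (Fin n → ℝ) → (Fin n → ℝ)) (f : (Fin n → ℝ) → ℝ)
    (hM : M.Nonempty) (hopen : IsOpen M)
    (hinvex : ∀ x ∈ M, ∀ x₀ ∈ M, ∀ τ ∈ Set.Icc (0:ℝ) 1,
      E x₀ + τ • η (E x) (E x₀) ∈ M)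
    (hdiff : ∀ x ∈ M, DifferentiableAt ℝ (f ∘ E) x)
    (hskew : ∀ x ∈ M, ∀ x₀ ∈ M, η (E x₀) (E x) = - η (E x) (E x₀))
    (hEinvex : ∀ x ∈ M, ∀ x₀ ∈ M,
      exp (f (E x)) - exp (f (E x₀)) ≥
        exp (f (E x₀)) * fderiv ℝ (f ∘ E) x₀ (η (E x) (E x₀))) :
    ∀ x ∈ M, ∀ x₀ ∈ M,
      exp (f (E x)) * fderiv ℝ (f ∘ E) x (η (E x) (E x₀)) -
        exp (f (E x₀)) * fderiv ℝ (f ∘ E) x₀ (η (E x) (E x₀)) ≥ 0 :=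
  exp_E_invex_monotonicity_general E M η f hskew hEinvex
end

section
/- Let E : ℝⁿ → ℝⁿ, M a nonempty open E-invex subset of ℝⁿ, and f : M → ℝ an E-differentiable exponentially strictly E-invex function on M with respect to a skew-symmetric η. Then for all x, x₀ ∈ M with x ≠ x₀, (∇f(E(x))·e^{f(E(x))} − ∇f(E(x₀))·e^{f(E(x₀))}) · η(E(x), E(x₀)) > 0. -/
open Real

theorem exp_strictly_E_invex_strict_monotonicity_general {n : ℕ}
    (E : (Fin n → ℝ) → (Fin n → ℝ)) (M : Set (Fin n → ℝ))
    (η : (Fin n → ℝ) → (Fin n → ℝ) → (Fin n → ℝ)) (f : (Fin n → ℝ) → ℝ)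
    (hskew : ∀ x ∈ M, ∀ x₀ ∈ M, η (E x₀) (E x) = - η (E x) (E x₀))
    (hEinvex : ∀ x ∈ M, ∀ x₀ ∈ M, x ≠ x₀ →
      exp (f (E x)) - exp (f (E x₀)) >
        exp (f (E x₀)) * fderiv ℝ (f ∘ E) x₀ (η (E x) (E x₀))) :
    ∀ x ∈ M, ∀ x₀ ∈ M, x ≠ x₀ →
      exp (f (E x)) * fderiv ℝ (f ∘ E) x (η (E x) (E x₀)) -
        exp (f (E x₀)) * fderiv ℝ (f ∘ E) x₀ (η (E x) (E x₀)) > 0 := by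
  intro x hx x₀ hx₀ hne
  have at_x₀ := hEinvex x hx x₀ hx₀ hne
  have at_x : exp (f (E x₀)) - exp (f (E x)) >
      -(exp (f (E x)) * fderiv ℝ (f ∘ E) x (η (E x) (E x₀))) := by
    simpa only [hskew x hx x₀ hx₀, map_neg, mul_neg] using hEinvex x₀ hx₀ x hx hne.symm
  linarith

theorem exp_strictly_E_invex_strict_monotonicity {n : ℕ}
    (E : (Fin n → ℝ) → (Fin n → ℝ)) (M : Set (Fin n → ℝ))
    (η : (Fin n → ℝ) → (Fin n → ℝ) → (Fin n → ℝ)) (f : (Fin n → ℝ) → ℝ)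
    (hM : M.Nonempty) (hopen : IsOpen M)
    (hinvex : ∀ x ∈ M, ∀ x₀ ∈ M, ∀ τ ∈ Set.Icc (0:ℝ) 1,
      E x₀ + τ • η (E x) (E x₀) ∈ M)
    (hdiff : ∀ x ∈ M, DifferentiableAt ℝ (f ∘ E) x)
    (hskew : ∀ x ∈ M, ∀ x₀ ∈ M, η (E x₀) (E x) = - η (E x) (E x₀))
    (hEinvex : ∀ x ∈ M, ∀ x₀ ∈ M, x ≠ x₀ →
      exp (f (E x)) - exp (f (E x₀)) >
        exp (f (E x₀)) * fderiv ℝ (f ∘ E) x₀ (η (E x) (E x₀))) :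
    ∀ x ∈ M, ∀ x₀ ∈ M, x ≠ x₀ →
      exp (f (E x)) * fderiv ℝ (f ∘ E) x (η (E x) (E x₀)) -
        exp (f (E x₀)) * fderiv ℝ (f ∘ E) x₀ (η (E x) (E x₀)) > 0 :=
  exp_strictly_E_invex_strict_monotonicity_general E M η f hskew hEinvex
end

section
/- Sufficiency of E-KKT conditions under exponential E-invexity: Consider the vector optimization problem minimize f(x) = (f₁(x),…,f_p(x)) subject to g_k(x) ≤ 0 (k = 1,…,m) and h_j(x) = 0 (j = 1,…,q), where all functions are E-differentiable. Suppose (E(ȳ), τ̄, ρ̄, ξ̄) satisfies the E-KKT conditions: Σᵢ τ̄ᵢ ∇fᵢ(E(ȳ)) + Σₖ ρ̄ₖ ∇gₖ(E(ȳ)) + Σⱼ ξ̄ⱼ ∇hⱼ(E(ȳ)) = 0, ρ̄ₖ gₖ(E(ȳ)) = 0 for all k, τ̄ ≥ 0 with τ̄ ≠ 0, ρ̄ ≥ 0. If each fᵢ is exponentially E-invex at ȳ, each gₖ with k active at E(ȳ) is exponentially E-invex at ȳ, each hⱼ with ξ̄ⱼ > 0 is exponentially E-invex at ȳ, and each −hⱼ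 with ξ̄ⱼ < 0 is exponentially E-invex at ȳ (all with respect to the same η on the E-feasible set Ω_E), then E(ȳ) is a weak E-Pareto solution: there is no feasible E(x) with fᵢ(E(x)) < fᵢ(E(ȳ)) for all i. -/
/-!
Evaluate the stationarity condition at `v = η (E x) (E ȳ)` for a feasible `x` that strictly improves
every objective. Since `exp` is increasing and positive, exponential E-invexity turns each
comparison of values at `E x` and `E ȳ` into the sign of a directional derivative in direction `v`:
every objective term is negative, and by complementary slackness and feasibility every multiplied
constraint term is nonpositive. As `τ̄ ≥ 0` and `τ̄ ≠ 0`, the evaluated stationarity sum is then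
negative, although it equals zero.
-/

open Real

lemma neg_of_exp_mul_le_exp_sub_exp_of_lt {a b d : ℝ} (hab : a < b)
    (hinvex : exp b * d ≤ exp a - exp b) : d < 0 := by
  have := exp_lt_exp.mpr hab
  nlinarith [exp_pos b]

lemma nonpos_of_exp_mul_le_exp_sub_exp_of_le {a b d : ℝ} (hab : a ≤ b)
    (hinvex : exp b * d ≤ exp a - exp b) : d ≤ 0 := by
  have := exp_le_exp.mpr hab
  nlinarith [exp_pos b]

lemma sum_mul_neg_of_nonneg_of_ne_zero {ι : Type*} [Fintype ι] {τ a : ι → ℝ}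
    (hτ : ∀ i, 0 ≤ τ i) (hτne : τ ≠ 0) (ha : ∀ i, a i < 0) : ∑ i, τ i * a i < 0 := by
  obtain ⟨i₀, hi₀⟩ := Function.ne_iff.mp hτne
  exact Finset.sum_neg' (fun i _ => mul_nonpos_of_nonneg_of_nonpos (hτ i) (ha i).le)
    ⟨i₀, Finset.mem_univ _, mul_neg_of_pos_of_neg ((hτ i₀).lt_of_ne' hi₀) (ha i₀)⟩

lemma mul_nonpos_of_slackness_of_exp_invex {ρ a b d : ℝ} (hρ : 0 ≤ ρ) (hslack : ρ * b = 0)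
    (ha : a ≤ 0) (hinvex : b = 0 → exp b * d ≤ exp a - exp b) : ρ * d ≤ 0 := by
  rcases hρ.eq_or_lt with rfl | hρpos
  · rw [zero_mul]
  · have hb : b = 0 := (mul_eq_zero.mp hslack).resolve_left hρpos.ne'
    exact mul_nonpos_of_nonneg_of_nonpos hρ
      (nonpos_of_exp_mul_le_exp_sub_exp_of_le (hb ▸ ha) (hinvex hb))

lemma mul_nonpos_of_eq_of_exp_invex {ξ a b d : ℝ} (hab : a = b)
    (hpos : 0 < ξ → exp b * d ≤ exp a - exp b)
    (hneg : ξ < 0 → exp (-b) * -d ≤ exp (-a) - exp (-b)) : ξ * d ≤ 0 := by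
  rcases lt_trichotomy ξ 0 with hξ | rfl | hξ
  · exact mul_nonpos_of_nonpos_of_nonneg hξ.le
      (neg_nonpos.mp (nonpos_of_exp_mul_le_exp_sub_exp_of_le (neg_le_neg hab.ge) (hneg hξ)))
  · rw [zero_mul]
  · exact mul_nonpos_of_nonneg_of_nonpos hξ.le
      (nonpos_of_exp_mul_le_exp_sub_exp_of_le hab.le (hpos hξ))

theorem EKKT_sufficiency_weak_E_Pareto_general {n p m q : ℕ}
    (E : (Fin n → ℝ) → (Fin n → ℝ))
    (f : Fin p → (Fin n → ℝ) → ℝ) (g : Fin m → (Fin n → ℝ) → ℝ)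
    (h : Fin q → (Fin n → ℝ) → ℝ)
    (η : (Fin n → ℝ) → (Fin n → ℝ) → (Fin n → ℝ))
    (ΩE : Set (Fin n → ℝ))
    (hΩE : ΩE = {x | (∀ k, g k (E x) ≤ 0) ∧ ∀ j, h j (E x) = 0})
    (ybar : Fin n → ℝ) (hfeas : ybar ∈ ΩE)
    (τbar : Fin p → ℝ) (ρbar : Fin m → ℝ) (ξbar : Fin q → ℝ)
    (hstat : (∑ i, τbar i • fderiv ℝ (fun z => f i (E z)) ybar) +
        (∑ k, ρbar k • fderiv ℝ (fun z => g k (E z)) ybar) +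
        (∑ j, ξbar j • fderiv ℝ (fun z => h j (E z)) ybar) = 0)
    (hslack : ∀ k, ρbar k * g k (E ybar) = 0)
    (hτ : ∀ i, 0 ≤ τbar i) (hτne : τbar ≠ 0) (hρ : ∀ k, 0 ≤ ρbar k)
    (hfinvex : ∀ i, ∀ x ∈ ΩE,
      exp (f i (E x)) - exp (f i (E ybar)) ≥
        exp (f i (E ybar)) * fderiv ℝ (fun z => f i (E z)) ybar (η (E x) (E ybar)))
    (hginvex : ∀ k, g k (E ybar) = 0 → ∀ x ∈ ΩE,
      exp (g k (E x)) - exp (g k (E ybar)) ≥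
        exp (g k (E ybar)) * fderiv ℝ (fun z => g k (E z)) ybar (η (E x) (E ybar)))
    (hhinvex : ∀ j, 0 < ξbar j → ∀ x ∈ ΩE,
      exp (h j (E x)) - exp (h j (E ybar)) ≥
        exp (h j (E ybar)) * fderiv ℝ (fun z => h j (E z)) ybar (η (E x) (E ybar)))
    (hnhinvex : ∀ j, ξbar j < 0 → ∀ x ∈ ΩE,
      exp (-h j (E x)) - exp (-h j (E ybar)) ≥
        exp (-h j (E ybar)) * fderiv ℝ (fun z => -h j (E z)) ybar (η (E x) (E ybar))) :
    ¬ ∃ x ∈ ΩE, ∀ i, f i (E x) < f i (E ybar) := by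
  rintro ⟨x, hx, hlt⟩
  obtain ⟨hgx, hhx⟩ := hΩE ▸ hx
  have hhy : ∀ j, h j (E ybar) = 0 := (hΩE ▸ hfeas).2
  have hobj := sum_mul_neg_of_nonneg_of_ne_zero hτ hτne fun i =>
    neg_of_exp_mul_le_exp_sub_exp_of_lt (hlt i) (hfinvex i x hx)
  have hineq := Finset.sum_nonpos fun k (_ : k ∈ Finset.univ) =>
    mul_nonpos_of_slackness_of_exp_invex (hρ k) (hslack k) (hgx k) (hginvex k · x hx)
  have heq := Finset.sum_nonpos fun j (_ : j ∈ Finset.univ) =>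
    mul_nonpos_of_eq_of_exp_invex ((hhx j).trans (hhy j).symm) (hhinvex j · x hx) fun hξ => by
      simpa only [fderiv_fun_neg, neg_apply] using hnhinvex j hξ x hx
  have hzero := DFunLike.congr_fun hstat (η (E x) (E ybar))
  simp only [add_apply, FunLike.coe_sum, Finset.sum_apply, FunLike.coe_smul, Pi.smul_apply,
    smul_eq_mul, zero_apply] at hzero
  linarith

theorem EKKT_sufficiency_weak_E_Pareto {n p m q : ℕ}
    (E : (Fin n → ℝ) → (Fin n → ℝ))
    (f : Fin p → (Fin n → ℝ) → ℝ) (g : Fin m → (Fin n → ℝ) → ℝ)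
    (h : Fin q → (Fin n → ℝ) → ℝ)
    (η : (Fin n → ℝ) → (Fin n → ℝ) → (Fin n → ℝ))
    (hE : Function.Bijective E)
    (ΩE : Set (Fin n → ℝ))
    (hΩE : ΩE = {x | (∀ k, g k (E x) ≤ 0) ∧ ∀ j, h j (E x) = 0})
    (ybar : Fin n → ℝ) (hfeas : ybar ∈ ΩE)
    (τbar : Fin p → ℝ) (ρbar : Fin m → ℝ) (ξbar : Fin q → ℝ)
    (hdf : ∀ i, DifferentiableAt ℝ (fun z => f i (E z)) ybar)
    (hdg : ∀ k, DifferentiableAt ℝ (fun z => g k (E z)) ybar)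
    (hdh : ∀ j, DifferentiableAt ℝ (fun z => h j (E z)) ybar)
    (hstat : (∑ i, τbar i • fderiv ℝ (fun z => f i (E z)) ybar) +
        (∑ k, ρbar k • fderiv ℝ (fun z => g k (E z)) ybar) +
        (∑ j, ξbar j • fderiv ℝ (fun z => h j (E z)) ybar) = 0)
    (hslack : ∀ k, ρbar k * g k (E ybar) = 0)
    (hτ : ∀ i, 0 ≤ τbar i) (hτne : τbar ≠ 0) (hρ : ∀ k, 0 ≤ ρbar k)
    (hfinvex : ∀ i, ∀ x ∈ ΩE,
      exp (f i (E x)) - exp (f i (E ybar)) ≥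
        exp (f i (E ybar)) * fderiv ℝ (fun z => f i (E z)) ybar (η (E x) (E ybar)))
    (hginvex : ∀ k, g k (E ybar) = 0 → ∀ x ∈ ΩE,
      exp (g k (E x)) - exp (g k (E ybar)) ≥
        exp (g k (E ybar)) * fderiv ℝ (fun z => g k (E z)) ybar (η (E x) (E ybar)))
    (hhinvex : ∀ j, 0 < ξbar j → ∀ x ∈ ΩE,
      exp (h j (E x)) - exp (h j (E ybar)) ≥
        exp (h j (E ybar)) * fderiv ℝ (fun z => h j (E z)) ybar (η (E x) (E ybar)))
    (hnhinvex : ∀ j, ξbar j < 0 → ∀ x ∈ ΩE,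
      exp (-h j (E x)) - exp (-h j (E ybar)) ≥
        exp (-h j (E ybar)) * fderiv ℝ (fun z => -h j (E z)) ybar (η (E x) (E ybar))) :
    ¬ ∃ x ∈ ΩE, ∀ i, f i (E x) < f i (E ybar) :=
  EKKT_sufficiency_weak_E_Pareto_general E f g h η ΩE hΩE ybar hfeas τbar ρbar ξbar hstat hslack hτ
    hτne hρ hfinvex hginvex hhinvex hnhinvex
end
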